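/- arXiv:2003.13713 — 3 statements merged into one kernel-verified Lean document; each statement's English description precedes it below -/
import Mathlib

section
/- Let G be a finite group acting on a K-algebra A by K-algebra automorphisms, let B = A^G be the invariant subalgebra, and let W be a right B-module. Equip the relative tensor product W ⊗_B A with the G-action through the second tensor factor, i.e. g • (w ⊗ a) = w ⊗ (g • a). Then the K-linear map W → (W ⊗_B A)^G, w ↦ w ⊗ 1, into the subspace of G-invariant elements, is bijective. -/
/-!
Averaging over `G` (possible since `|G|` is invertible in `K`) gives a Reynolds operator
`R : A → B` which is `B`-linear with `R 1 = 1`. Hence `w ⊗ a ↦ w · R a` is well defined on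
`W ⊗_B A`; it is a left inverse of `w ↦ w ⊗ 1`, and composing in the other order gives the
average of the `G`-action on `W ⊗_B A`, which is the identity on invariants.
-/

open scoped TensorProduct

/-- The invariant subalgebra `B = A^G` of a `K`-algebra `A` with a `G`-action by
`K`-algebra automorphisms. -/
def fixedSubalgebra (K G A : Type) [Field K] [Group G] [Ring A] [Algebra K A]
    [MulSemiringAction G A] [SMulCommClass G K A] : Subalgebra K A where
  carrier := {a : A | ∀ g : G, g • a = a}
  mul_mem' := fun {x y} hx hy g => by rw [smul_mul', hx g, hy g]
  one_mem' := fun g => smul_one g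
  add_mem' := fun {x y} hx hy g => by rw [smul_add, hx g, hy g]
  zero_mem' := fun g => smul_zero g
  algebraMap_mem' := fun r g => by
    rw [Algebra.algebraMap_eq_smul_one, smul_comm, smul_one]

/-- The relative tensor product `W ⊗_B A` of a right `B`-module `W` with `A` over the
invariant subalgebra `B = A^G`, realized as the quotient of `W ⊗_K A` by the `K`-span of
the balancing relators `(w·b) ⊗ a - w ⊗ (b·a)`. -/
noncomputable abbrev indTensor (K G A : Type) [Field K] [Group G] [Ring A] [Algebra K A]
    [MulSemiringAction G A] [SMulCommClass G K A]
    (W : Type) [AddCommGroup W] [Module K W]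
    [Module (↥(fixedSubalgebra K G A))ᵐᵒᵖ W] : Type :=
  (TensorProduct K W A) ⧸ (Submodule.span K {x : TensorProduct K W A |
    ∃ (w : W) (b : ↥(fixedSubalgebra K G A)) (a : A),
      x = (MulOpposite.op b • w) ⊗ₜ[K] a - w ⊗ₜ[K] ((b : A) * a)})

open Representation

theorem Representation.IsIntertwiningMap.map_averageMap {k G V W : Type*} [CommRing k]
    [Group G] [Fintype G] [Invertible (Fintype.card G : k)]
    [AddCommGroup V] [Module k V] [AddCommGroup W] [Module k W]
    {ρ : Representation k G V} {σ : Representation k G W} {f : V →ₗ[k] W}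
    (hf : IsIntertwiningMap ρ σ f) (v : V) :
    f (ρ.averageMap v) = σ.averageMap (f v) := by
  simp [GroupAlgebra.average, map_sum, hf.isIntertwining]

section Reynolds

variable (K G A : Type) [Field K] [Group G] [Ring A] [Algebra K A]
  [MulSemiringAction G A] [SMulCommClass G K A]

theorem smul_mul_of_mem_fixedSubalgebra {b : A} (hb : b ∈ fixedSubalgebra K G A)
    (g : G) (a : A) : g • (b * a) = b * (g • a) := by
  rw [smul_mul', hb g]

variable [Fintype G] [Invertible (Fintype.card G : K)]

noncomputable def reynolds : A →ₗ[K] fixedSubalgebra K G A :=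
  LinearMap.codRestrict (Subalgebra.toSubmodule (fixedSubalgebra K G A))
    (ofDistribMulAction K G A).averageMap
    fun a => averageMap_invariant (ofDistribMulAction K G A) a

variable {K G A}

theorem coe_reynolds (a : A) :
    (reynolds K G A a : A) = (ofDistribMulAction K G A).averageMap a :=
  rfl

theorem reynolds_one : reynolds K G A 1 = 1 :=
  Subtype.ext <| (coe_reynolds 1).trans <| averageMap_id _ 1 fun g => smul_one g

theorem reynolds_mul_left (b : fixedSubalgebra K G A) (a : A) :
    reynolds K G A ((b : A) * a) = b * reynolds K G A a := by
  have hb : IsIntertwiningMap (ofDistribMulAction K G A) (ofDistribMulAction K G A)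
      (LinearMap.mulLeft K (b : A)) :=
    ⟨fun g a => (smul_mul_of_mem_fixedSubalgebra K G A b.2 g a).symm⟩
  exact Subtype.ext <| (coe_reynolds _).trans (hb.map_averageMap a).symm

end Reynolds

namespace indTensor

variable {K G A : Type} [Field K] [Group G] [Ring A] [Algebra K A]
  [MulSemiringAction G A] [SMulCommClass G K A]
  {W : Type} [AddCommGroup W] [Module K W] [Module (fixedSubalgebra K G A)ᵐᵒᵖ W]

variable (K G A W) in
noncomputable def mk₂ : W →ₗ[K] A →ₗ[K] indTensor K G A W :=
  (TensorProduct.mk K W A).compr₂ (Submodule.mkQ _)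

theorem mk₂_apply (w : W) (a : A) :
    mk₂ K G A W w a = Submodule.Quotient.mk (w ⊗ₜ[K] a) :=
  rfl

theorem mk_op_smul_tmul (b : fixedSubalgebra K G A) (w : W) (a : A) :
    (Submodule.Quotient.mk ((MulOpposite.op b • w) ⊗ₜ[K] a) : indTensor K G A W)
      = Submodule.Quotient.mk (w ⊗ₜ[K] ((b : A) * a)) :=
  (Submodule.Quotient.eq _).2 <| Submodule.subset_span ⟨w, b, a, rfl⟩

theorem linearMap_ext {M : Type} [AddCommGroup M] [Module K M]
    {f f' : indTensor K G A W →ₗ[K] M}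
    (h : ∀ w a,
      f (Submodule.Quotient.mk (w ⊗ₜ[K] a)) = f' (Submodule.Quotient.mk (w ⊗ₜ[K] a))) :
    f = f' :=
  Submodule.linearMap_qext _ <| TensorProduct.ext' h

noncomputable def lift {M : Type} [AddCommGroup M] [Module K M] (f : W →ₗ[K] A →ₗ[K] M)
    (hf : ∀ w (b : fixedSubalgebra K G A) a, f (MulOpposite.op b • w) a = f w (b * a)) :
    indTensor K G A W →ₗ[K] M :=
  Submodule.liftQ _ (TensorProduct.lift f) <| Submodule.span_le.2 <| by
    rintro _ ⟨w, b, a, rfl⟩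
    simp [hf]

theorem lift_mk {M : Type} [AddCommGroup M] [Module K M] (f : W →ₗ[K] A →ₗ[K] M)
    (hf : ∀ w (b : fixedSubalgebra K G A) a, f (MulOpposite.op b • w) a = f w (b * a))
    (w : W) (a : A) :
    lift f hf (Submodule.Quotient.mk (w ⊗ₜ[K] a)) = f w a :=
  rfl

variable (K G A W) in
noncomputable def rep : Representation K G (indTensor K G A W) where
  toFun g := lift ((mk₂ K G A W).compl₂ (ofDistribMulAction K G A g)) fun w b a => by
    simp [mk₂_apply, mk_op_smul_tmul, smul_mul_of_mem_fixedSubalgebra K G A b.2]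
  map_one' := linearMap_ext fun _ _ => by simp [lift_mk, mk₂_apply]
  map_mul' _ _ := linearMap_ext fun _ _ => by simp [lift_mk, mk₂_apply]

theorem rep_mk (g : G) (w : W) (a : A) :
    rep K G A W g (Submodule.Quotient.mk (w ⊗ₜ[K] a))
      = Submodule.Quotient.mk (w ⊗ₜ[K] (g • a)) :=
  rfl

variable [Fintype G] [Invertible (Fintype.card G : K)]
  [IsScalarTower K (fixedSubalgebra K G A)ᵐᵒᵖ W]

variable (K G A W) in
noncomputable def smulReynolds : indTensor K G A W →ₗ[K] W :=
  lift (LinearMap.mk₂ K (fun w a => MulOpposite.op (reynolds K G A a) • w)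
      (fun _ _ _ => smul_add _ _ _) (fun _ _ _ => smul_comm _ _ _)
      (fun w a a' => by rw [map_add, MulOpposite.op_add, add_smul])
      (fun c w a => by rw [map_smul, MulOpposite.op_smul, smul_assoc]))
    fun w b a => by
      simp only [LinearMap.mk₂_apply, reynolds_mul_left, MulOpposite.op_mul, mul_smul]

theorem smulReynolds_mk (w : W) (a : A) :
    smulReynolds K G A W (Submodule.Quotient.mk (w ⊗ₜ[K] a))
      = MulOpposite.op (reynolds K G A a) • w :=
  rfl

theorem smulReynolds_mk_one (w : W) :
    smulReynolds K G A W (Submodule.Quotient.mk (w ⊗ₜ[K] (1 : A))) = w := by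
  rw [smulReynolds_mk, reynolds_one, MulOpposite.op_one, one_smul]

theorem mk_smulReynolds_tmul_one (t : indTensor K G A W) :
    Submodule.Quotient.mk (smulReynolds K G A W t ⊗ₜ[K] (1 : A))
      = (rep K G A W).averageMap t := by
  have hmk (w : W) : IsIntertwiningMap (ofDistribMulAction K G A) (rep K G A W) (mk₂ K G A W w) :=
    ⟨fun _ _ => rfl⟩
  suffices (mk₂ K G A W).flip 1 ∘ₗ smulReynolds K G A W = (rep K G A W).averageMap from
    LinearMap.congr_fun this t
  refine linearMap_ext fun w a => ?_
  rw [LinearMap.comp_apply, LinearMap.flip_apply, smulReynolds_mk, mk₂_apply, mk_op_smul_tmul,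
    mul_one, coe_reynolds, ← mk₂_apply, (hmk w).map_averageMap]
  rfl

end indTensor

/-- For a finite group `G` acting on a `K`-algebra `A` by `K`-algebra
automorphisms with invariant subalgebra `B = A^G`, and a right `B`-module `W`, the
`K`-linear map `W → (W ⊗_B A)^G`, `w ↦ w ⊗ 1`, into the subspace of invariants for the
`G`-action through the second tensor factor, is bijective. -/
theorem stmt_6 (K G A : Type) [Field K] [CharZero K] [Group G] [Finite G]
    [Ring A] [Algebra K A] [MulSemiringAction G A] [SMulCommClass G K A]
    (W : Type) [AddCommGroup W] [Module K W]
    [Module (↥(fixedSubalgebra K G A))ᵐᵒᵖ W]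
    [IsScalarTower K (↥(fixedSubalgebra K G A))ᵐᵒᵖ W] :
    ∃ ρ : G → (indTensor K G A W →ₗ[K] indTensor K G A W),
      (∀ (g : G) (w : W) (a : A),
        ρ g (Submodule.Quotient.mk (w ⊗ₜ[K] a))
          = Submodule.Quotient.mk (w ⊗ₜ[K] (g • a))) ∧
      Function.Injective (fun w : W =>
        (Submodule.Quotient.mk (w ⊗ₜ[K] (1 : A)) : indTensor K G A W)) ∧
      Set.range (fun w : W =>
          (Submodule.Quotient.mk (w ⊗ₜ[K] (1 : A)) : indTensor K G A W))
        = {t : indTensor K G A W | ∀ g : G, ρ g t = t} := by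
  cases nonempty_fintype G
  let : Invertible (Fintype.card G : K) :=
    invertibleOfNonzero (Nat.cast_ne_zero.2 Fintype.card_ne_zero)
  refine ⟨indTensor.rep K G A W, indTensor.rep_mk, ?_, ?_⟩
  · exact Function.LeftInverse.injective (g := indTensor.smulReynolds K G A W)
      indTensor.smulReynolds_mk_one
  · ext t
    constructor
    · rintro ⟨w, rfl⟩ g
      rw [indTensor.rep_mk, smul_one]
    · intro ht
      exact ⟨indTensor.smulReynolds K G A W t,
        (indTensor.mk_smulReynolds_tmul_one t).trans (averageMap_id _ t ht)⟩
end

section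
/- Let G be a finite group acting on a K-algebra A by K-algebra automorphisms and let B = A^G be the invariant subalgebra. Then the following are equivalent: (i) the canonical Galois map β : A ⊗_B A → (G → A), a ⊗ a′ ↦ (g ↦ a · (g • a′)), is bijective; (ii) for every G-equivariant right A-module V, the evaluation map V^G ⊗_B A → V, v ⊗ a ↦ v · a, is bijective. -/
open scoped TensorProduct

/-- A `G`-equivariant right `A`-module: a right `A`-module `V` (a module over `Aᵐᵒᵖ`)
together with a `K`-linear `G`-action `ρ` satisfying `g • (v·a) = (g•v)·(g•a)`. -/
structure EquivariantModule (K A G : Type) [Field K] [Ring A] [Algebra K A] [Group G]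
    [MulSemiringAction G A] [SMulCommClass G K A] where
  V : Type
  [isAddCommGroup : AddCommGroup V]
  [isModuleK : Module K V]
  [isModuleA : Module Aᵐᵒᵖ V]
  [isTower : IsScalarTower K Aᵐᵒᵖ V]
  ρ : Representation K G V
  ρ_smul : ∀ (g : G) (a : A) (v : V),
    ρ g (MulOpposite.op a • v) = MulOpposite.op (g • a) • ρ g v

attribute [instance] EquivariantModule.isAddCommGroup EquivariantModule.isModuleK
  EquivariantModule.isModuleA EquivariantModule.isTower

/-- The relative tensor product `A ⊗_B A` over the invariant subalgebra `B = A^G`,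
realized as the quotient of `A ⊗_K A` by the `K`-span of the balancing relators
`(a·b) ⊗ a' - a ⊗ (b·a')` for `G`-invariant `b`. -/
noncomputable abbrev galTensor (K A G : Type) [Field K] [Ring A] [Algebra K A] [Group G]
    [MulSemiringAction G A] : Type :=
  (TensorProduct K A A) ⧸ (Submodule.span K {x : TensorProduct K A A |
    ∃ (a a' b : A) (_ : ∀ g : G, g • b = b),
      x = (a * b) ⊗ₜ[K] a' - a ⊗ₜ[K] (b * a')})

/-- The relative tensor product `V^G ⊗_B A` of the invariants of a `G`-equivariant right
`A`-module `V` with `A` over the invariant subalgebra `B = A^G`, realized as a quotient of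
`V^G ⊗_K A` by the `K`-span of the balancing relators. -/
noncomputable abbrev coinvTensor (K A G : Type) [Field K] [Ring A] [Algebra K A] [Group G]
    [MulSemiringAction G A] [SMulCommClass G K A] (X : EquivariantModule K A G) : Type :=
  (TensorProduct K X.ρ.invariants A) ⧸ (Submodule.span K
    {x : TensorProduct K X.ρ.invariants A |
      ∃ (v : X.V) (hv : v ∈ X.ρ.invariants) (b a : A) (_ : ∀ g : G, g • b = b)
        (hbv : MulOpposite.op b • v ∈ X.ρ.invariants),
        x = (⟨MulOpposite.op b • v, hbv⟩ : X.ρ.invariants) ⊗ₜ[K] a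
              - (⟨v, hv⟩ : X.ρ.invariants) ⊗ₜ[K] (b * a)})


/-! If `β` is bijective, a preimage of `δ₁` gives Galois coordinates `(xᵢ, yᵢ)`:
`∑ᵢ xᵢ (g • yᵢ) = δ_{g,1}`, hence also `∑ᵢ (g • xᵢ) yᵢ = δ_{g,1}`. With the trace
`tr v = ∑_g g • v : V^G`, the map `v ↦ ∑ᵢ [tr (v xᵢ) ⊗ yᵢ]` inverts the evaluation map: on one side
`∑ᵢ tr (v xᵢ) yᵢ = ∑_g (g • v) ∑ᵢ (g • xᵢ) yᵢ = v`; on the other, for invariant `v`,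
`tr (v a xᵢ) = v tr (a xᵢ)` and `tr (a xᵢ) ∈ B` crosses the tensor sign, leaving
`[v ⊗ ∑ᵢ tr (a xᵢ) yᵢ] = [v ⊗ a]`.

Conversely, `G → A` with `(f a) g = f g (g • a)` and `(h • f) g = f (g h)` is an equivariant
module whose invariants are the constant functions; identifying them with `A` turns its
evaluation map into `β`. -/

open MulOpposite

section GaloisCoordinates

variable {A : Type*} (G : Type*) [Semiring A] [Group G] [MulSemiringAction G A]

structure IsGaloisCoordinates (S : Finset (A × A)) : Prop where
  sum_mul_eq_one : ∑ p ∈ S, p.1 * p.2 = 1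
  sum_mul_smul_eq_zero : ∀ g : G, g ≠ 1 → ∑ p ∈ S, p.1 * (g • p.2) = 0

variable {G} {S : Finset (A × A)}

namespace IsGaloisCoordinates

lemma sum_smul_mul_eq_zero (hS : IsGaloisCoordinates G S) {g : G} (hg : g ≠ 1) :
    ∑ p ∈ S, (g • p.1) * p.2 = 0 := by
  have h := congrArg (g • ·) (hS.sum_mul_smul_eq_zero g⁻¹ (inv_ne_one.2 hg))
  simpa only [smul_zero, Finset.smul_sum, smul_mul', smul_inv_smul] using h

lemma sum_apply_sum_smul_mul [Fintype G] {M : Type*} [AddCommMonoid M]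
    (hS : IsGaloisCoordinates G S) (F : G → A → M) (hF : ∀ g, F g 0 = 0) :
    ∑ g : G, F g (∑ p ∈ S, (g • p.1) * p.2) = F 1 1 := by
  rw [Fintype.sum_eq_single 1 fun g hg => by rw [hS.sum_smul_mul_eq_zero hg, hF]]
  simp only [one_smul, hS.sum_mul_eq_one]

end IsGaloisCoordinates

end GaloisCoordinates

lemma smul_sum_smul {G M : Type*} [Group G] [Fintype G] [AddCommMonoid M] [DistribMulAction G M]
    (h : G) (m : M) : h • ∑ g : G, g • m = ∑ g : G, g • m := by
  simp only [Finset.smul_sum, smul_smul]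
  exact Fintype.sum_bijective (h * ·) (Group.mulLeft_bijective h) _ _ fun _ => rfl

lemma exists_isGaloisCoordinates {K A G : Type} [Field K] [Ring A] [Algebra K A] [Group G]
    [MulSemiringAction G A] (β : galTensor K A G →ₗ[K] (G → A))
    (hβ : ∀ (a a' : A) (g : G), β (Submodule.Quotient.mk (a ⊗ₜ[K] a')) g = a * (g • a'))
    (hsurj : Function.Surjective β) : ∃ S : Finset (A × A), IsGaloisCoordinates G S := by
  classical
  obtain ⟨t, ht⟩ := hsurj (Pi.single 1 1)
  obtain ⟨w, rfl⟩ := Submodule.Quotient.mk_surjective _ t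
  obtain ⟨S, rfl⟩ := TensorProduct.exists_finset w
  have hβS (g : G) : ∑ p ∈ S, p.1 * (g • p.2) = (Pi.single 1 1 : G → A) g := by
    rw [← ht, ← Submodule.mkQ_apply, map_sum, map_sum, Finset.sum_apply]
    simp only [Submodule.mkQ_apply, hβ]
  exact ⟨S, by simpa using hβS 1, fun g hg => by simpa [hg] using hβS g⟩

section Descent

variable {K A G : Type} [Field K] [Ring A] [Algebra K A] [Group G]
  [MulSemiringAction G A] [SMulCommClass G K A]

namespace EquivariantModule

variable (X : EquivariantModule K A G)

lemma op_smul_mem_invariants {b : A} (hb : ∀ g : G, g • b = b) {v : X.V}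
    (hv : v ∈ X.ρ.invariants) : op b • v ∈ X.ρ.invariants := fun g => by
  rw [X.ρ_smul, hb, hv g]

lemma mk_op_smul_tmul {b : A} (hb : ∀ g : G, g • b = b) (v : X.ρ.invariants) (a : A) :
    (Submodule.Quotient.mk
        ((⟨op b • (v : X.V), X.op_smul_mem_invariants hb v.2⟩ : X.ρ.invariants) ⊗ₜ[K] a) :
      coinvTensor K A G X) = Submodule.Quotient.mk (v ⊗ₜ[K] (b * a)) := by
  rw [Submodule.Quotient.eq]
  exact Submodule.subset_span ⟨v, v.2, b, a, hb, _, rfl⟩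

noncomputable def evalMap : coinvTensor K A G X →ₗ[K] X.V :=
  Submodule.liftQ _ (TensorProduct.lift
    (((Algebra.lsmul K K X.V).toLinearMap ∘ₗ (opLinearEquiv K).toLinearMap).flip ∘ₗ
      X.ρ.invariants.subtype)) <| by
    rw [Submodule.span_le]
    rintro _ ⟨v, -, b, a, -, -, rfl⟩
    simp

lemma evalMap_mk (v : X.ρ.invariants) (a : A) :
    X.evalMap (Submodule.Quotient.mk (v ⊗ₜ[K] a)) = op a • (v : X.V) := rfl

variable [Fintype G]

noncomputable def trace : X.V →ₗ[K] X.ρ.invariants :=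
  (Representation.norm X.ρ).codRestrict _ fun v g => Representation.self_norm_apply X.ρ g v

lemma coe_trace (v : X.V) : (X.trace v : X.V) = ∑ g : G, X.ρ g v := by
  simp [trace, Representation.norm]

lemma trace_op_smul (v : X.ρ.invariants) (c : A) :
    X.trace (op c • (v : X.V)) =
      ⟨op (∑ g : G, g • c) • (v : X.V), X.op_smul_mem_invariants (smul_sum_smul · c) v.2⟩ := by
  ext
  simp only [coe_trace, X.ρ_smul, v.2 _, Finset.op_sum, Finset.sum_smul]

noncomputable def descentMap (S : Finset (A × A)) : X.V →ₗ[K] coinvTensor K A G X :=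
  ∑ p ∈ S, Submodule.mkQ _ ∘ₗ (TensorProduct.mk K _ A).flip p.2 ∘ₗ X.trace ∘ₗ
    Algebra.lsmul K K X.V (op p.1)

lemma descentMap_apply (S : Finset (A × A)) (v : X.V) :
    X.descentMap S v = ∑ p ∈ S, Submodule.Quotient.mk (X.trace (op p.1 • v) ⊗ₜ[K] p.2) := by
  simp [descentMap]

variable {X} {S : Finset (A × A)}

lemma evalMap_descentMap (hS : IsGaloisCoordinates G S) (v : X.V) :
    X.evalMap (X.descentMap S v) = v := by
  calc X.evalMap (X.descentMap S v)
      = ∑ g : G, op (∑ p ∈ S, (g • p.1) * p.2) • X.ρ g v := by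
        simp only [descentMap_apply, map_sum, evalMap_mk, coe_trace, X.ρ_smul, Finset.smul_sum,
          smul_smul, ← op_mul, Finset.op_sum, Finset.sum_smul]
        exact Finset.sum_comm
    _ = v := by
        rw [hS.sum_apply_sum_smul_mul (fun g c => op c • X.ρ g v) fun _ => by simp]
        simp

lemma descentMap_evalMap (hS : IsGaloisCoordinates G S) (z : coinvTensor K A G X) :
    X.descentMap S (X.evalMap z) = z := by
  induction z using Submodule.Quotient.induction_on with | _ t => ?_
  induction t using TensorProduct.induction_on with
  | zero => simp
  | add t t' ht ht' => simp only [Submodule.Quotient.mk_add, map_add, ht, ht']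
  | tmul v a =>
    calc X.descentMap S (X.evalMap (Submodule.Quotient.mk (v ⊗ₜ[K] a)))
        = ∑ p ∈ S, Submodule.Quotient.mk (v ⊗ₜ[K] ((∑ g : G, g • (a * p.1)) * p.2)) := by
          simp only [evalMap_mk, descentMap_apply, smul_smul, ← op_mul, trace_op_smul,
            mk_op_smul_tmul _ (smul_sum_smul · _)]
      _ = Submodule.Quotient.mk (v ⊗ₜ[K] (∑ g : G, (g • a) * ∑ p ∈ S, (g • p.1) * p.2)) := by
          simp only [← Submodule.mkQ_apply, ← map_sum, ← TensorProduct.tmul_sum, Finset.sum_mul,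
            Finset.mul_sum, smul_mul', mul_assoc]
          rw [Finset.sum_comm]
      _ = Submodule.Quotient.mk (v ⊗ₜ[K] a) := by
          rw [hS.sum_apply_sum_smul_mul (fun g c => (g • a) * c) fun _ => mul_zero _]
          simp

lemma evalMap_bijective (hS : IsGaloisCoordinates G S) : Function.Bijective X.evalMap :=
  Function.bijective_iff_has_inverse.2
    ⟨X.descentMap S, descentMap_evalMap hS, evalMap_descentMap hS⟩

end EquivariantModule

end Descent

section Regular

variable {K A G : Type} [Field K] [Ring A] [Algebra K A] [Group G]
  [MulSemiringAction G A] [SMulCommClass G K A]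

def RegularModule (A G : Type) : Type := G → A

namespace RegularModule

instance : AddCommGroup (RegularModule A G) := Pi.addCommGroup

instance : Module K (RegularModule A G) := Pi.module _ _ _

instance : Module Aᵐᵒᵖ (RegularModule A G) :=
  Module.compHom (G → A) (RingHom.op (RingHom.pi fun g => MulSemiringAction.toRingHom G A g))

instance : IsScalarTower K Aᵐᵒᵖ (RegularModule A G) where
  smul_assoc k a f := funext fun g => by
    show f g * (g • (k • a).unop) = k • (f g * (g • a.unop))
    rw [unop_smul, smul_comm g k, mul_smul_comm]

def rep : Representation K G (RegularModule A G) where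
  toFun g := LinearMap.funLeft K A (· * g)
  map_one' := LinearMap.ext fun f => funext fun x => congrArg f (mul_one x)
  map_mul' g h := LinearMap.ext fun f => funext fun x => congrArg f (mul_assoc x g h).symm

end RegularModule

variable (K A G)

def regularModule : EquivariantModule K A G where
  V := RegularModule A G
  ρ := RegularModule.rep
  ρ_smul g a f := funext fun x => congrArg (f (x * g) * ·) (mul_smul x g a)

noncomputable def regularInvariantsEquiv : (regularModule K A G).ρ.invariants ≃ₗ[K] A where
  toFun f := f.1 1
  invFun a := ⟨fun _ => a, fun _ => rfl⟩
  map_add' _ _ := rfl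
  map_smul' _ _ := rfl
  left_inv f := Subtype.ext <| funext fun g =>
    (congrFun (f.2 g) 1).symm.trans (congrArg f.1 (one_mul g))
  right_inv _ := rfl

noncomputable def galTensorEquiv : galTensor K A G ≃ₗ[K] coinvTensor K A G (regularModule K A G) :=
  Submodule.Quotient.equiv _ _
    (TensorProduct.congr (regularInvariantsEquiv K A G).symm (LinearEquiv.refl K A)) <| by
    rw [Submodule.map_span]
    congr 1
    ext x
    constructor
    · rintro ⟨_, ⟨a, a', b, hb, rfl⟩, rfl⟩
      refine ⟨fun _ => a, fun _ => rfl, b, a', hb,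
        (regularModule K A G).op_smul_mem_invariants hb fun _ => rfl, ?_⟩
      simp only [LinearEquiv.coe_coe, map_sub, TensorProduct.congr_tmul, LinearEquiv.refl_apply]
      congr 2
      exact Subtype.ext <| funext fun g => congrArg (a * ·) (hb g).symm
    · rintro ⟨v, hv, b, a, hb, -, rfl⟩
      refine ⟨_, ⟨v 1, a, b, hb, rfl⟩, ?_⟩
      simp only [LinearEquiv.coe_coe, map_sub, TensorProduct.congr_tmul, LinearEquiv.refl_apply]
      congr 2
      · exact (LinearEquiv.symm_apply_eq _).2 (congrArg (v 1 * ·) (one_smul G b).symm)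
      · exact (regularInvariantsEquiv K A G).symm_apply_apply ⟨v, hv⟩

end Regular

theorem stmt_7_general (K A G : Type) [Field K] [Ring A] [Algebra K A]
    [Group G] [Finite G] [MulSemiringAction G A] [SMulCommClass G K A] :
    (∃ β : galTensor K A G →ₗ[K] (G → A),
        (∀ (a a' : A) (g : G),
          β (Submodule.Quotient.mk (a ⊗ₜ[K] a')) g = a * (g • a')) ∧
        Function.Bijective β) ↔
    (∀ X : EquivariantModule K A G,
        ∃ ev : coinvTensor K A G X →ₗ[K] X.V,
          (∀ (v : X.V) (hv : v ∈ X.ρ.invariants) (a : A),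
            ev (Submodule.Quotient.mk ((⟨v, hv⟩ : X.ρ.invariants) ⊗ₜ[K] a))
              = MulOpposite.op a • v) ∧
          Function.Bijective ev) := by
  have := Fintype.ofFinite G
  constructor
  · rintro ⟨β, hβ, hβ_bij⟩ X
    obtain ⟨S, hS⟩ := exists_isGaloisCoordinates β hβ hβ_bij.surjective
    exact ⟨X.evalMap, fun v hv a => X.evalMap_mk ⟨v, hv⟩ a, X.evalMap_bijective hS⟩
  · intro h
    obtain ⟨ev, hev, hev_bij⟩ := h (regularModule K A G)
    refine ⟨ev ∘ₗ (galTensorEquiv K A G).toLinearMap, fun a a' g => ?_,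
      hev_bij.comp (galTensorEquiv K A G).bijective⟩
    exact congrFun (hev (fun _ => a) (fun _ => rfl) a') g

/-- For a finite group `G` acting on a `K`-algebra `A` by `K`-algebra
automorphisms with `B = A^G`, the canonical Galois map `β : A ⊗_B A → (G → A)`,
`a ⊗ a' ↦ (g ↦ a·(g • a'))`, is bijective if and only if for every `G`-equivariant right
`A`-module `V` the evaluation map `V^G ⊗_B A → V`, `v ⊗ a ↦ v·a`, is bijective. -/
theorem stmt_7 (K A G : Type) [Field K] [CharZero K] [Ring A] [Algebra K A]
    [Group G] [Finite G] [MulSemiringAction G A] [SMulCommClass G K A] :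
    (∃ β : galTensor K A G →ₗ[K] (G → A),
        (∀ (a a' : A) (g : G),
          β (Submodule.Quotient.mk (a ⊗ₜ[K] a')) g = a * (g • a')) ∧
        Function.Bijective β) ↔
    (∀ X : EquivariantModule K A G,
        ∃ ev : coinvTensor K A G X →ₗ[K] X.V,
          (∀ (v : X.V) (hv : v ∈ X.ρ.invariants) (a : A),
            ev (Submodule.Quotient.mk ((⟨v, hv⟩ : X.ρ.invariants) ⊗ₜ[K] a))
              = MulOpposite.op a • v) ∧
          Function.Bijective ev) :=
  stmt_7_general K A G
end

section
/- Let A = B ⊕ V be a ℤ/2-graded K-algebra with even part B and odd part V, and let τ be the parity involution of A. Then the map β : A ⊗_B A → A × A, a ⊗ a′ ↦ (a · a′, a · τ(a′)), is bijective if and only if the multiplication-induced map μ : V ⊗_B V → B is bijective. (The map β is the canonical Galois map for the ℤ/2-action generated by τ, whose invariant subalgebra is B, under the identification of functions ℤ/2 → A with A × A.) -/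
open scoped TensorProduct

/-- The relative tensor product `A ⊗_B A` over the even part `B` of a graded algebra,
realized as the quotient of `A ⊗_K A` by the `K`-span of the balancing relators
`(a·b) ⊗ a' - a ⊗ (b·a')` for `b ∈ B`. -/
noncomputable abbrev grTensorA (K A : Type) [Field K] [Ring A] [Algebra K A]
    (B : Submodule K A) : Type :=
  (TensorProduct K A A) ⧸ (Submodule.span K {x : TensorProduct K A A |
    ∃ (a a' b : A) (_ : b ∈ B), x = (a * b) ⊗ₜ[K] a' - a ⊗ₜ[K] (b * a')})

/-- The relative tensor product `V ⊗_B V` of the odd part `V` with itself over the even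
part `B`, realized as the quotient of `V ⊗_K V` by the `K`-span of the balancing relators
`(v·b) ⊗ v' - v ⊗ (b·v')` for `b ∈ B`. -/
noncomputable abbrev grTensorV (K A : Type) [Field K] [Ring A] [Algebra K A]
    (B V : Submodule K A) : Type :=
  @HasQuotient.Quotient _ _ Submodule.hasQuotient (Submodule.span K {x : TensorProduct K V V |
    ∃ (v v' b : A) (hv : v ∈ V) (hv' : v' ∈ V) (_ : b ∈ B) (hvb : v * b ∈ V)
      (hbv' : b * v' ∈ V),
      x = (⟨v * b, hvb⟩ : V) ⊗ₜ[K] (⟨v', hv'⟩ : V)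
            - (⟨v, hv⟩ : V) ⊗ₜ[K] (⟨b * v', hbv'⟩ : V)})

/-! Splitting the right factor as `B ⊕ V` gives `A ⊗_B A ≅ A ⊕ A ⊗_B V`, and splitting the
left factor of `A ⊗_B V` gives `A ⊗_B A ≅ A ⊕ V ⊕ (V ⊗_B V)`, with inverse
`(x, v, t) ↦ x ⊗ 1 + 1 ⊗ v + t`. In these coordinates `β (x, v, t) = (x + y, x - y)` where
`y = v + μ t`, and `(x, y) ↦ (x + y, x - y)` is invertible because `2` is. Hence `β` is bijective
iff `(v, t) ↦ v + μ t : V × (V ⊗_B V) → A = B ⊕ V` is, that is, iff `μ` is. -/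

open Function

namespace Submodule

section Module

variable {R E : Type*} [Ring R] [AddCommGroup E] [Module R E] {p q : Submodule R E}

theorem projection_apply_of_mapsTo (h : IsCompl p q) {T : E →ₗ[R] E}
    (hp : ∀ x ∈ p, T x ∈ p) (hq : ∀ x ∈ q, T x ∈ q) (x : E) :
    p.projection q h (T x) = T (p.projection q h x) := by
  have hcomm := (LinearMap.IsIdempotentElem.commute_iff (isIdempotentElem_projection h)).2
    ⟨by rwa [range_projection, Module.End.mem_invtSubmodule_iff_forall_mem_of_mem],
      by rwa [ker_projection, Module.End.mem_invtSubmodule_iff_forall_mem_of_mem]⟩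
  exact LinearMap.congr_fun hcomm.eq x

theorem bijective_subtype_coprod_iff (h : IsCompl p q) {N : Type*} [AddCommGroup N]
    [Module R N] (f : N →ₗ[R] p) :
    Bijective (q.subtype.coprod (p.subtype ∘ₗ f)) ↔ Bijective f := by
  have hfactor : ⇑(q.subtype.coprod (p.subtype ∘ₗ f)) =
      prodEquivOfIsCompl p q h ∘ Prod.map f id ∘ Prod.swap := by
    ext ⟨v, n⟩
    simp [add_comm]
  rw [hfactor, (prodEquivOfIsCompl p q h).bijective.of_comp_iff',
    Bijective.of_comp_iff _ Prod.swap_bijective, Prod.map_bijective]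
  simp [bijective_id]

end Module

section Algebra

variable {K A : Type*} [Field K] [Ring A] [Algebra K A] {p q : Submodule K A}

theorem projection_mul_left (h : IsCompl p q) {b : A} (hp : ∀ x ∈ p, b * x ∈ p)
    (hq : ∀ x ∈ q, b * x ∈ q) (a : A) :
    p.projection q h (b * a) = b * p.projection q h a :=
  projection_apply_of_mapsTo h (T := LinearMap.mulLeft K b) hp hq a

theorem projection_mul_right (h : IsCompl p q) {b : A} (hp : ∀ x ∈ p, x * b ∈ p)
    (hq : ∀ x ∈ q, x * b ∈ q) (a : A) :
    p.projection q h (a * b) = p.projection q h a * b :=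
  projection_apply_of_mapsTo h (T := LinearMap.mulRight K b) hp hq a

end Algebra

end Submodule

theorem bijective_fst_add_snd_prod_fst_sub_snd (K M : Type*) [Field K] [CharZero K]
    [AddCommGroup M] [Module K M] :
    Bijective ((LinearMap.fst K M M + LinearMap.snd K M M).prod
      (LinearMap.fst K M M - LinearMap.snd K M M)) := by
  refine bijective_iff_has_inverse.2
    ⟨fun y => ((2 : K)⁻¹ • (y.1 + y.2), (2 : K)⁻¹ • (y.1 - y.2)), fun x => ?_, fun y => ?_⟩
  · ext <;> simp <;> module
  · ext <;> simp <;> module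

section Parity

variable {K A : Type*} [Field K] [Ring A] [Algebra K A] {B V : Submodule K A}

theorem parity_apply (hcompl : IsCompl B V) {τ : A →ₗ[K] A} (hτB : ∀ b ∈ B, τ b = b)
    (hτV : ∀ v ∈ V, τ v = -v) (a : A) :
    τ a = B.projection V hcompl a - V.projection B hcompl.symm a := by
  conv_lhs => rw [← Submodule.projection_add_projection_eq_self hcompl a]
  rw [map_add, hτB _ (Submodule.projection_apply_mem _ _),
    hτV _ (Submodule.projection_apply_mem _ _), sub_eq_add_neg]

theorem parity_mul_left (hcompl : IsCompl B V) (hBB : ∀ b ∈ B, ∀ b' ∈ B, b * b' ∈ B)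
    (hBV : ∀ b ∈ B, ∀ v ∈ V, b * v ∈ V) {τ : A →ₗ[K] A} (hτB : ∀ b ∈ B, τ b = b)
    (hτV : ∀ v ∈ V, τ v = -v) : ∀ b ∈ B, ∀ a, τ (b * a) = b * τ a := by
  intro b hb a
  rw [parity_apply hcompl hτB hτV, parity_apply hcompl hτB hτV,
    Submodule.projection_mul_left _ (hBB b hb) (hBV b hb),
    Submodule.projection_mul_left _ (hBV b hb) (hBB b hb), mul_sub]

end Parity

namespace grTensorA

variable {K A : Type} [Field K] [Ring A] [Algebra K A] {B : Submodule K A}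
  {M : Type*} [AddCommGroup M] [Module K M]

variable (K A B) in
noncomputable def tmul : A →ₗ[K] A →ₗ[K] grTensorA K A B :=
  (TensorProduct.mk K A A).compr₂ (Submodule.mkQ _)

theorem tmul_mul (a a' : A) {b : A} (hb : b ∈ B) :
    tmul K A B (a * b) a' = tmul K A B a (b * a') :=
  (Submodule.Quotient.eq _).2 <| Submodule.subset_span ⟨a, a', b, hb, rfl⟩

theorem ext {f g : grTensorA K A B →ₗ[K] M}
    (h : ∀ a a', f (tmul K A B a a') = g (tmul K A B a a')) : f = g :=
  Submodule.linearMap_qext _ (TensorProduct.ext' h)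

noncomputable def lift (f : A →ₗ[K] A →ₗ[K] M)
    (hf : ∀ a a' b : A, b ∈ B → f (a * b) a' = f a (b * a')) : grTensorA K A B →ₗ[K] M :=
  Submodule.liftQ _ (TensorProduct.lift f) <| Submodule.span_le.2 <| by
    rintro _ ⟨a, a', b, hb, rfl⟩
    simp [hf a a' b hb]

noncomputable def galoisMap (τ : A →ₗ[K] A) (hτ : ∀ b ∈ B, ∀ a, τ (b * a) = b * τ a) :
    grTensorA K A B →ₗ[K] A × A :=
  (lift (LinearMap.mul K A) fun a a' b _ => mul_assoc a b a').prod
    (lift ((LinearMap.mul K A).compl₂ τ) fun a a' b hb => by simp [hτ b hb, mul_assoc])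

theorem galoisMap_tmul (τ : A →ₗ[K] A) (hτ : ∀ b ∈ B, ∀ a, τ (b * a) = b * τ a) (a a' : A) :
    galoisMap τ hτ (tmul K A B a a') = (a * a', a * τ a') :=
  rfl

end grTensorA

namespace grTensorV

variable {K A : Type} [Field K] [Ring A] [Algebra K A] {B V : Submodule K A}
  {M : Type*} [AddCommGroup M] [Module K M]

variable (K A B V) in
noncomputable def tmul : V →ₗ[K] V →ₗ[K] grTensorV K A B V :=
  (TensorProduct.mk K V V).compr₂ (Submodule.mkQ _)

theorem tmul_mul (v v' : V) {b : A} (hb : b ∈ B) (hvb : (v : A) * b ∈ V)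
    (hbv' : b * v' ∈ V) :
    tmul K A B V ⟨v * b, hvb⟩ v' = tmul K A B V v ⟨b * v', hbv'⟩ :=
  (Submodule.Quotient.eq _).2 <|
    Submodule.subset_span ⟨v, v', b, v.2, v'.2, hb, hvb, hbv', rfl⟩

theorem ext {f g : grTensorV K A B V →ₗ[K] M}
    (h : ∀ v v', f (tmul K A B V v v') = g (tmul K A B V v v')) : f = g :=
  Submodule.linearMap_qext _ (TensorProduct.ext' h)

noncomputable def lift (f : V →ₗ[K] V →ₗ[K] M)
    (hf : ∀ (v v' : V) (b : A) (hvb : (v : A) * b ∈ V) (hbv' : b * v' ∈ V), b ∈ B →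
      f ⟨v * b, hvb⟩ v' = f v ⟨b * v', hbv'⟩) : grTensorV K A B V →ₗ[K] M :=
  Submodule.liftQ _ (TensorProduct.lift f) <| Submodule.span_le.2 <| by
    rintro _ ⟨v, v', b, hv, hv', hb, hvb, hbv', rfl⟩
    simp [hf ⟨v, hv⟩ ⟨v', hv'⟩ b hvb hbv' hb]

noncomputable def mulMap (hVV : ∀ v ∈ V, ∀ v' ∈ V, v * v' ∈ B) :
    grTensorV K A B V →ₗ[K] B :=
  lift
    (LinearMap.mk₂ K (fun v v' => ⟨v * v', hVV _ v.2 _ v'.2⟩)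
      (fun _ _ _ => Subtype.ext (add_mul _ _ _)) (fun _ _ _ => Subtype.ext (smul_mul_assoc _ _ _))
      (fun _ _ _ => Subtype.ext (mul_add _ _ _)) (fun _ _ _ => Subtype.ext (mul_smul_comm _ _ _)))
    fun v v' b _ _ _ => Subtype.ext (mul_assoc (v : A) b v')

theorem mulMap_tmul (hVV : ∀ v ∈ V, ∀ v' ∈ V, v * v' ∈ B) (v v' : V) :
    mulMap hVV (tmul K A B V v v') = ⟨v * v', hVV _ v.2 _ v'.2⟩ :=
  rfl

variable (K A B V) in
noncomputable def toGrTensorA : grTensorV K A B V →ₗ[K] grTensorA K A B :=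
  lift ((grTensorA.tmul K A B).compl₁₂ V.subtype V.subtype)
    fun _ _ _ _ _ hb => grTensorA.tmul_mul _ _ hb

@[simp]
theorem toGrTensorA_tmul (v v' : V) :
    toGrTensorA K A B V (tmul K A B V v v') = grTensorA.tmul K A B v v' :=
  rfl

end grTensorV

namespace grTensorA

variable {K A : Type} [Field K] [Ring A] [Algebra K A] {B V : Submodule K A}

noncomputable def decompose (hcompl : IsCompl B V) (hBB : ∀ b ∈ B, ∀ b' ∈ B, b * b' ∈ B)
    (hBV : ∀ b ∈ B, ∀ v ∈ V, b * v ∈ V) (hVB : ∀ v ∈ V, ∀ b ∈ B, v * b ∈ V) :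
    grTensorA K A B →ₗ[K] A × V × grTensorV K A B V :=
  (lift ((LinearMap.mul K A).compl₂ (B.projection V hcompl)) fun a a' b hb => by
      simp [Submodule.projection_mul_left hcompl (hBB b hb) (hBV b hb), mul_assoc]).prod <|
  (lift
      (LinearMap.mk₂ K (fun a a' => ⟨B.projection V hcompl a * V.projection B hcompl.symm a',
          hBV _ (B.projection_apply_mem _ _) _ (V.projection_apply_mem _ _)⟩)
        (fun _ _ _ => by ext; simp [add_mul]) (fun _ _ _ => by ext; simp)
        (fun _ _ _ => by ext; simp [mul_add]) (fun _ _ _ => by ext; simp))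
      fun a a' b hb => by
        ext
        simp [Submodule.projection_mul_right hcompl (hBB · · b hb) (hVB · · b hb),
          Submodule.projection_mul_left hcompl.symm (hBV b hb) (hBB b hb), mul_assoc]).prod <|
  lift ((grTensorV.tmul K A B V).compl₁₂ (V.projectionOnto B hcompl.symm)
      (V.projectionOnto B hcompl.symm)) fun a a' b hb => by
    have hab : V.projectionOnto B hcompl.symm (a * b) =
        ⟨V.projection B hcompl.symm a * b, hVB _ (V.projection_apply_mem _ _) b hb⟩ :=
      Subtype.ext (Submodule.projection_mul_right _ (hVB · · b hb) (hBB · · b hb) a)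
    have hba' : V.projectionOnto B hcompl.symm (b * a') =
        ⟨b * V.projection B hcompl.symm a', hBV b hb _ (V.projection_apply_mem _ _)⟩ :=
      Subtype.ext (Submodule.projection_mul_left _ (hBV b hb) (hBB b hb) a')
    rw [LinearMap.compl₁₂_apply, LinearMap.compl₁₂_apply, hab, hba']
    exact grTensorV.tmul_mul _ _ hb _ _

theorem decompose_tmul (hcompl : IsCompl B V) (hBB : ∀ b ∈ B, ∀ b' ∈ B, b * b' ∈ B)
    (hBV : ∀ b ∈ B, ∀ v ∈ V, b * v ∈ V) (hVB : ∀ v ∈ V, ∀ b ∈ B, v * b ∈ V) (a a' : A) :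
    decompose hcompl hBB hBV hVB (tmul K A B a a') =
      (a * B.projection V hcompl a',
        ⟨B.projection V hcompl a * V.projection B hcompl.symm a',
          hBV _ (B.projection_apply_mem _ _) _ (V.projection_apply_mem _ _)⟩,
        grTensorV.tmul K A B V (V.projectionOnto B hcompl.symm a)
          (V.projectionOnto B hcompl.symm a')) :=
  rfl

variable (K A B V) in
noncomputable def recompose : A × V × grTensorV K A B V →ₗ[K] grTensorA K A B :=
  ((tmul K A B).flip 1).coprod <|
    (tmul K A B 1 ∘ₗ V.subtype).coprod (grTensorV.toGrTensorA K A B V)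

theorem recompose_comp_decompose (hcompl : IsCompl B V)
    (hBB : ∀ b ∈ B, ∀ b' ∈ B, b * b' ∈ B) (hBV : ∀ b ∈ B, ∀ v ∈ V, b * v ∈ V)
    (hVB : ∀ v ∈ V, ∀ b ∈ B, v * b ∈ V) :
    recompose K A B V ∘ₗ decompose hcompl hBB hBV hVB = LinearMap.id := by
  refine ext fun a a' => ?_
  have h₁ : tmul K A B (a * B.projection V hcompl a') 1 =
      tmul K A B a (B.projection V hcompl a') := by
    simpa using tmul_mul a 1 (B.projection_apply_mem hcompl a')
  have h₂ : tmul K A B 1 (B.projection V hcompl a * V.projection B hcompl.symm a') =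
      tmul K A B (B.projection V hcompl a) (V.projection B hcompl.symm a') := by
    simpa using (tmul_mul 1 _ (B.projection_apply_mem hcompl a)).symm
  simp only [LinearMap.comp_apply, decompose_tmul, recompose, LinearMap.coprod_apply,
    LinearMap.flip_apply, Submodule.subtype_apply, grTensorV.toGrTensorA_tmul,
    Submodule.coe_projectionOnto_apply, h₁, h₂, LinearMap.id_apply]
  rw [← LinearMap.map_add₂, Submodule.projection_add_projection_eq_self, ← map_add,
    Submodule.projection_add_projection_eq_self]

theorem decompose_comp_recompose (hcompl : IsCompl B V) (hone : (1 : A) ∈ B)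
    (hBB : ∀ b ∈ B, ∀ b' ∈ B, b * b' ∈ B) (hBV : ∀ b ∈ B, ∀ v ∈ V, b * v ∈ V)
    (hVB : ∀ v ∈ V, ∀ b ∈ B, v * b ∈ V) :
    decompose hcompl hBB hBV hVB ∘ₗ recompose K A B V = LinearMap.id := by
  have hB1 := B.projection_apply_of_mem_left hcompl hone
  have hV1 := V.projectionOnto_apply_of_mem_right hcompl.symm hone
  have hV1' := V.projection_apply_of_mem_right hcompl.symm hone
  have hBv (v : V) := B.projection_apply_right hcompl v
  have hVv (v : V) := V.projectionOnto_apply_left hcompl.symm v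
  refine LinearMap.prod_ext (LinearMap.ext fun x => ?_) <| LinearMap.prod_ext
    (LinearMap.ext fun v => ?_) (grTensorV.ext fun v v' => ?_)
  · simp [recompose, decompose_tmul, hB1, hV1, hV1']
  · simp [recompose, decompose_tmul, hB1, hV1, hBv, hVv]
  · simp [recompose, decompose_tmul, hBv, hVv]

noncomputable def decomposeEquiv (hcompl : IsCompl B V) (hone : (1 : A) ∈ B)
    (hBB : ∀ b ∈ B, ∀ b' ∈ B, b * b' ∈ B) (hBV : ∀ b ∈ B, ∀ v ∈ V, b * v ∈ V)
    (hVB : ∀ v ∈ V, ∀ b ∈ B, v * b ∈ V) :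
    grTensorA K A B ≃ₗ[K] A × V × grTensorV K A B V :=
  .ofLinearMap _ _ (decompose_comp_recompose hcompl hone hBB hBV hVB)
    (recompose_comp_decompose hcompl hBB hBV hVB)

theorem galoisMap_comp_recompose (hone : (1 : A) ∈ B) (hVV : ∀ v ∈ V, ∀ v' ∈ V, v * v' ∈ B)
    {τ : A →ₗ[K] A} (hτB : ∀ b ∈ B, τ b = b) (hτV : ∀ v ∈ V, τ v = -v)
    (hτ : ∀ b ∈ B, ∀ a, τ (b * a) = b * τ a) :
    galoisMap τ hτ ∘ₗ recompose K A B V =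
      (LinearMap.fst K A A + LinearMap.snd K A A).prod (LinearMap.fst K A A - LinearMap.snd K A A)
        ∘ₗ LinearMap.id.prodMap (V.subtype.coprod (B.subtype ∘ₗ grTensorV.mulMap hVV)) := by
  refine LinearMap.prod_ext (LinearMap.ext fun x => ?_) <| LinearMap.prod_ext
    (LinearMap.ext fun v => ?_) (grTensorV.ext fun v v' => ?_)
  · simp [recompose, galoisMap_tmul, hτB 1 hone]
  · simp [recompose, galoisMap_tmul, hτV _ v.2]
  · simp [recompose, galoisMap_tmul, grTensorV.mulMap_tmul, hτV _ v'.2]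

theorem bijective_galoisMap_iff [CharZero K] (hcompl : IsCompl B V) (hone : (1 : A) ∈ B)
    (hBB : ∀ b ∈ B, ∀ b' ∈ B, b * b' ∈ B) (hBV : ∀ b ∈ B, ∀ v ∈ V, b * v ∈ V)
    (hVB : ∀ v ∈ V, ∀ b ∈ B, v * b ∈ V) (hVV : ∀ v ∈ V, ∀ v' ∈ V, v * v' ∈ B)
    {τ : A →ₗ[K] A} (hτB : ∀ b ∈ B, τ b = b) (hτV : ∀ v ∈ V, τ v = -v)
    (hτ : ∀ b ∈ B, ∀ a, τ (b * a) = b * τ a) :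
    Bijective (galoisMap τ hτ) ↔ Bijective (grTensorV.mulMap hVV) := by
  have hrecompose : Bijective (recompose K A B V) :=
    (decomposeEquiv hcompl hone hBB hBV hVB).symm.bijective
  calc Bijective (galoisMap τ hτ)
      ↔ Bijective (galoisMap τ hτ ∘ₗ recompose K A B V) := (hrecompose.of_comp_iff _).symm
    _ ↔ Bijective (Prod.map id (V.subtype.coprod (B.subtype ∘ₗ grTensorV.mulMap hVV))) := by
      rw [galoisMap_comp_recompose hone hVV hτB hτV, LinearMap.coe_comp]
      exact (bijective_fst_add_snd_prod_fst_sub_snd K A).of_comp_iff' _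
    _ ↔ Bijective (V.subtype.coprod (B.subtype ∘ₗ grTensorV.mulMap hVV)) := by
      simp [Prod.map_bijective, bijective_id]
    _ ↔ Bijective (grTensorV.mulMap hVV) := Submodule.bijective_subtype_coprod_iff hcompl _

end grTensorA

/-- For a `ℤ/2`-graded `K`-algebra `A = B ⊕ V` with parity involution `τ`,
the canonical Galois map `β : A ⊗_B A → A × A`, `a ⊗ a' ↦ (a·a', a·τ(a'))`, is bijective if
and only if the multiplication-induced map `μ : V ⊗_B V → B` is bijective. -/
theorem stmt_9 (K A : Type) [Field K] [CharZero K] [Ring A] [Algebra K A]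
    (B V : Submodule K A) (hcompl : IsCompl B V) (hone : (1 : A) ∈ B)
    (hBB : ∀ b ∈ B, ∀ b' ∈ B, b * b' ∈ B) (hBV : ∀ b ∈ B, ∀ v ∈ V, b * v ∈ V)
    (hVB : ∀ v ∈ V, ∀ b ∈ B, v * b ∈ V) (hVV : ∀ v ∈ V, ∀ v' ∈ V, v * v' ∈ B)
    (τ : A →ₗ[K] A) (hτB : ∀ b ∈ B, τ b = b) (hτV : ∀ v ∈ V, τ v = -v) :
    ∃ (β : grTensorA K A B →ₗ[K] A × A) (μ : grTensorV K A B V →ₗ[K] B),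
      (∀ a a' : A, β (Submodule.Quotient.mk (a ⊗ₜ[K] a')) = (a * a', a * τ a')) ∧
      (∀ (v v' : A) (hv : v ∈ V) (hv' : v' ∈ V) (h : v * v' ∈ B),
        μ (Submodule.Quotient.mk ((⟨v, hv⟩ : V) ⊗ₜ[K] (⟨v', hv'⟩ : V))) = ⟨v * v', h⟩) ∧
      (Function.Bijective β ↔ Function.Bijective μ) := by
  have hτ := parity_mul_left hcompl hBB hBV hτB hτV
  exact ⟨grTensorA.galoisMap τ hτ, grTensorV.mulMap hVV, fun _ _ => rfl, fun _ _ _ _ _ => rfl,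
    grTensorA.bijective_galoisMap_iff hcompl hone hBB hBV hVB hVV hτB hτV hτ⟩
end
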